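/- arXiv:2305.18436 — 4 statements merged into one kernel-verified Lean document; each statement's English description precedes it below -/
import Mathlib

section
/- Let V ∈ ℝ^{n×r} with (V)_+ ≠ 0, where (V)_+ denotes the entrywise positive part max{V,0}. Then U₀ := √K · (V)_+ / ‖(V)_+‖_F belongs to Ω and is the unique minimizer of ‖U − V‖_F over U ∈ Ω; that is, Π_Ω(V) = √K (V)_+ / ‖(V)_+‖_F. -/
open Matrix Finset

/-- Frobenius norm of a real matrix. -/
noncomputable def frob {n r : ℕ} (M : Matrix (Fin n) (Fin r) ℝ) : ℝ :=
  Real.sqrt (∑ i, ∑ j, (M i j) ^ 2)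

private lemma sum_sub_sq_expand {n r : ℕ} (f g : Fin n → Fin r → ℝ) :
    ∑ i, ∑ j, (f i j - g i j) ^ 2
      = (∑ i, ∑ j, (f i j) ^ 2) - 2 * (∑ i, ∑ j, f i j * g i j)
        + ∑ i, ∑ j, (g i j) ^ 2 := by
  have h : ∀ i : Fin n, ∑ j, (f i j - g i j) ^ 2
      = (∑ j, (f i j) ^ 2) - 2 * (∑ j, f i j * g i j) + ∑ j, (g i j) ^ 2 := by
    intro i
    rw [Finset.mul_sum, ← Finset.sum_sub_distrib, ← Finset.sum_add_distrib]
    exact Finset.sum_congr rfl fun j _ => by ring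
  simp only [h, Finset.mul_sum]
  rw [← Finset.sum_sub_distrib, ← Finset.sum_add_distrib]

private lemma double_cs {n r : ℕ} (f g : Fin n → Fin r → ℝ) :
    (∑ i, ∑ j, f i j * g i j) ^ 2
      ≤ (∑ i, ∑ j, (f i j) ^ 2) * ∑ i, ∑ j, (g i j) ^ 2 := by
  have := Finset.sum_mul_sq_le_sq_mul_sq Finset.univ
      (fun p : Fin n × Fin r => f p.1 p.2) (fun p : Fin n × Fin r => g p.1 p.2)
  simpa only [Fintype.sum_prod_type] using this

/-- If the entrywise positive part `(V)₊` is nonzero, then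
`U₀ = √K (V)₊ / ‖(V)₊‖_F` belongs to `Ω = {U : ‖U‖_F² = K, U ≥ 0}` and is the unique
minimizer of `‖U − V‖_F` over `Ω`; i.e. `Π_Ω(V) = √K (V)₊ / ‖(V)₊‖_F`. -/
theorem projection_onto_Omega {n r K : ℕ} (hn : 1 ≤ n) (hr : 1 ≤ r) (hK : 1 ≤ K)
    (V : Matrix (Fin n) (Fin r) ℝ)
    (hV : (fun i j => max (V i j) 0) ≠ (0 : Matrix (Fin n) (Fin r) ℝ)) :
    let Vp : Matrix (Fin n) (Fin r) ℝ := fun i j => max (V i j) 0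
    let U₀ : Matrix (Fin n) (Fin r) ℝ := (Real.sqrt K / frob Vp) • Vp
    (frob U₀ ^ 2 = (K : ℝ) ∧ ∀ i j, 0 ≤ U₀ i j) ∧
    (∀ U : Matrix (Fin n) (Fin r) ℝ, frob U ^ 2 = (K : ℝ) → (∀ i j, 0 ≤ U i j) →
      frob (U₀ - V) ≤ frob (U - V)) ∧
    (∀ U : Matrix (Fin n) (Fin r) ℝ, frob U ^ 2 = (K : ℝ) → (∀ i j, 0 ≤ U i j) →
      frob (U - V) = frob (U₀ - V) → U = U₀) := by
  intro Vp U₀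
  have hVpnn : ∀ i j, 0 ≤ Vp i j := fun i j => le_max_right _ _
  set A : ℝ := ∑ i, ∑ j, (Vp i j) ^ 2 with hA
  -- A is positive
  have hApos : 0 < A := by
    obtain ⟨i0, j0, hij⟩ : ∃ i j, Vp i j ≠ 0 := by
      by_contra h
      push_neg at h
      exact hV (by funext i j; exact h i j)
    have h1 : (Vp i0 j0) ^ 2 ≤ ∑ j, (Vp i0 j) ^ 2 :=
      Finset.single_le_sum (f := fun j => (Vp i0 j) ^ 2) (fun j _ => sq_nonneg _)
        (Finset.mem_univ _)
    have h2 : (∑ j, (Vp i0 j) ^ 2) ≤ A :=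
      Finset.single_le_sum (f := fun i => ∑ j, (Vp i j) ^ 2)
        (fun i _ => Finset.sum_nonneg fun j _ => sq_nonneg _) (Finset.mem_univ _)
    exact lt_of_lt_of_le (sq_pos_of_ne_zero hij) (h1.trans h2)
  set a : ℝ := Real.sqrt A with ha
  have hapos : 0 < a := Real.sqrt_pos.mpr hApos
  have ha2 : a ^ 2 = A := Real.sq_sqrt hApos.le
  set c : ℝ := Real.sqrt (K : ℝ) with hc
  have hKpos : (0 : ℝ) < K := by exact_mod_cast hK
  have hcpos : 0 < c := Real.sqrt_pos.mpr hKpos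
  have hc2 : c ^ 2 = (K : ℝ) := Real.sq_sqrt hKpos.le
  have hfVp : frob Vp = a := by rw [frob]
  have hU₀app : ∀ i j, U₀ i j = (c / a) * Vp i j := by
    intro i j
    show (c / frob Vp) * Vp i j = _
    rw [hfVp]
  -- squared norm of U₀
  have hS2U₀ : ∑ i, ∑ j, (U₀ i j) ^ 2 = (K : ℝ) := by
    have : ∀ i, ∑ j, (U₀ i j) ^ 2 = (c / a) ^ 2 * ∑ j, (Vp i j) ^ 2 := by
      intro i
      rw [Finset.mul_sum]
      exact Finset.sum_congr rfl fun j _ => by rw [hU₀app]; ring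
    simp only [this]
    rw [← Finset.mul_sum, ← hA, ← ha2, ← hc2]
    field_simp
  have hU₀nn : ∀ i j, 0 ≤ U₀ i j := by
    intro i j
    rw [hU₀app]
    exact mul_nonneg (div_nonneg hcpos.le hapos.le) (hVpnn i j)
  -- inner product of U₀ with V equals c * a
  have hVpV : ∀ i j, Vp i j * V i j = (Vp i j) ^ 2 := by
    intro i j
    rcases le_or_gt 0 (V i j) with h | h
    · have hm : Vp i j = V i j := max_eq_left h
      rw [hm]; ring
    · have hm : Vp i j = 0 := max_eq_right h.le
      rw [hm]; ring
  have hipU₀V : ∑ i, ∑ j, U₀ i j * V i j = c * a := by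
    have : ∀ i j, U₀ i j * V i j = (c / a) * (Vp i j) ^ 2 := by
      intro i j
      rw [hU₀app, mul_assoc, hVpV]
    simp only [this, ← Finset.mul_sum]
    rw [← hA, ← ha2]
    field_simp
  -- key inequality: inner product with V is at most c * a for feasible U
  have hkey : ∀ U : Matrix (Fin n) (Fin r) ℝ, frob U ^ 2 = (K : ℝ) → (∀ i j, 0 ≤ U i j) →
      (∑ i, ∑ j, U i j * V i j) ≤ (∑ i, ∑ j, U i j * Vp i j) ∧
      (∑ i, ∑ j, U i j * Vp i j) ≤ c * a := by
    intro U hU2 hUnn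
    have hS2U : ∑ i, ∑ j, (U i j) ^ 2 = (K : ℝ) := by
      rw [← hU2, frob, Real.sq_sqrt]
      exact Finset.sum_nonneg fun i _ => Finset.sum_nonneg fun j _ => sq_nonneg _
    constructor
    · refine Finset.sum_le_sum fun i _ => Finset.sum_le_sum fun j _ => ?_
      exact mul_le_mul_of_nonneg_left (le_max_left _ _) (hUnn i j)
    · have hcs := double_cs (fun i j => U i j) (fun i j => Vp i j)
      rw [hS2U, ← hA] at hcs
      have hcs' : (∑ i, ∑ j, U i j * Vp i j) ^ 2 ≤ (c * a) ^ 2 := by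
        calc (∑ i, ∑ j, U i j * Vp i j) ^ 2 ≤ (K : ℝ) * A := hcs
          _ = (c * a) ^ 2 := by rw [mul_pow, hc2, ha2]
      have hnn : 0 ≤ ∑ i, ∑ j, U i j * Vp i j :=
        Finset.sum_nonneg fun i _ => Finset.sum_nonneg fun j _ =>
          mul_nonneg (hUnn i j) (hVpnn i j)
      calc (∑ i, ∑ j, U i j * Vp i j) = Real.sqrt ((∑ i, ∑ j, U i j * Vp i j) ^ 2) :=
            (Real.sqrt_sq hnn).symm
        _ ≤ Real.sqrt ((c * a) ^ 2) := Real.sqrt_le_sqrt hcs'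
        _ = c * a := Real.sqrt_sq (mul_nonneg hcpos.le hapos.le)
  -- distance expansion
  have hdist : ∀ U : Matrix (Fin n) (Fin r) ℝ, frob U ^ 2 = (K : ℝ) →
      (∑ i, ∑ j, ((U - V) i j) ^ 2)
        = (K : ℝ) - 2 * (∑ i, ∑ j, U i j * V i j) + ∑ i, ∑ j, (V i j) ^ 2 := by
    intro U hU2
    have hS2U : ∑ i, ∑ j, (U i j) ^ 2 = (K : ℝ) := by
      rw [← hU2, frob, Real.sq_sqrt]
      exact Finset.sum_nonneg fun i _ => Finset.sum_nonneg fun j _ => sq_nonneg _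
    have := sum_sub_sq_expand (fun i j => U i j) (fun i j => V i j)
    simp only [Matrix.sub_apply]
    rw [this, hS2U]
  have hfU₀2 : frob U₀ ^ 2 = (K : ℝ) := by
    rw [frob, Real.sq_sqrt]
    · exact hS2U₀
    · exact Finset.sum_nonneg fun i _ => Finset.sum_nonneg fun j _ => sq_nonneg _
  refine ⟨⟨hfU₀2, hU₀nn⟩, ?_, ?_⟩
  · -- minimality
    intro U hU2 hUnn
    rw [frob, frob]
    apply Real.sqrt_le_sqrt
    rw [hdist U hU2, hdist U₀ hfU₀2, hipU₀V]
    have h1 := (hkey U hU2 hUnn).1.trans (hkey U hU2 hUnn).2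
    linarith
  · -- uniqueness
    intro U hU2 hUnn heq
    have hS2U : ∑ i, ∑ j, (U i j) ^ 2 = (K : ℝ) := by
      rw [← hU2, frob, Real.sq_sqrt]
      exact Finset.sum_nonneg fun i _ => Finset.sum_nonneg fun j _ => sq_nonneg _
    -- squared distances are equal
    have hsq : (∑ i, ∑ j, ((U - V) i j) ^ 2) = ∑ i, ∑ j, ((U₀ - V) i j) ^ 2 := by
      have h1 : frob (U - V) ^ 2 = frob (U₀ - V) ^ 2 := by rw [heq]
      rw [frob, frob, Real.sq_sqrt, Real.sq_sqrt] at h1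
      · exact h1
      · exact Finset.sum_nonneg fun i _ => Finset.sum_nonneg fun j _ => sq_nonneg _
      · exact Finset.sum_nonneg fun i _ => Finset.sum_nonneg fun j _ => sq_nonneg _
    rw [hdist U hU2, hdist U₀ hfU₀2, hipU₀V] at hsq
    have hipUV : ∑ i, ∑ j, U i j * V i j = c * a := by linarith
    have hipUVp : ∑ i, ∑ j, U i j * Vp i j = c * a :=
      le_antisymm (hkey U hU2 hUnn).2 (hipUV ▸ (hkey U hU2 hUnn).1)
    -- sum of squares of (a • U - c • Vp) is zero
    have hzero : ∑ i, ∑ j, (a * U i j - c * Vp i j) ^ 2 = 0 := by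
      have := sum_sub_sq_expand (fun i j => a * U i j) (fun i j => c * Vp i j)
      rw [this]
      have e1 : ∑ i, ∑ j, (a * U i j) ^ 2 = a ^ 2 * ∑ i, ∑ j, (U i j) ^ 2 := by
        simp only [Finset.mul_sum]
        exact Finset.sum_congr rfl fun i _ => Finset.sum_congr rfl fun j _ => by ring
      have e2 : ∑ i, ∑ j, (a * U i j) * (c * Vp i j)
          = (a * c) * ∑ i, ∑ j, U i j * Vp i j := by
        simp only [Finset.mul_sum]
        exact Finset.sum_congr rfl fun i _ => Finset.sum_congr rfl fun j _ => by ring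
      have e3 : ∑ i, ∑ j, (c * Vp i j) ^ 2 = c ^ 2 * ∑ i, ∑ j, (Vp i j) ^ 2 := by
        simp only [Finset.mul_sum]
        exact Finset.sum_congr rfl fun i _ => Finset.sum_congr rfl fun j _ => by ring
      rw [e1, e2, e3, hS2U, hipUVp, ← hA, ← ha2, ← hc2]
      ring
    have hterm : ∀ i j, a * U i j - c * Vp i j = 0 := by
      intro i j
      have h1 := (Finset.sum_eq_zero_iff_of_nonneg
        (fun i _ => Finset.sum_nonneg fun j _ => sq_nonneg (a * U i j - c * Vp i j))).mp
        hzero i (Finset.mem_univ i)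
      have h2 := (Finset.sum_eq_zero_iff_of_nonneg
        (fun j _ => sq_nonneg (a * U i j - c * Vp i j))).mp h1 j (Finset.mem_univ j)
      exact pow_eq_zero_iff (two_ne_zero) |>.mp h2
    ext i j
    have := hterm i j
    rw [hU₀app]
    have hUij : a * U i j = c * Vp i j := by linarith
    field_simp
    linarith
end

section
/- Let U ∈ ℝ^{n×r} have all entries nonnegative with ‖U‖_F² = K, let α > 0, and suppose ⟨g(U), U⟩ < 0 (trace inner product). Then ‖(U − α g(U))_+‖_F² > K, where (·)_+ denotes the entrywise positive part. -/
open Matrix Finset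

/-- The all-ones vector in `ℝ^n`. -/
noncomputable def ones (n : ℕ) : Fin n → ℝ := fun _ => 1

/-- The gradient map `g(U) = (2A + 2L·I + 1 ȳᵀ + ȳ 1ᵀ) U`
with `ȳ = y + β(UUᵀ1 − 1)`. -/
noncomputable def gradLag {n r : ℕ} (A : Matrix (Fin n) (Fin n) ℝ) (y : Fin n → ℝ)
    (L β : ℝ) (U : Matrix (Fin n) (Fin r) ℝ) : Matrix (Fin n) (Fin r) ℝ :=
  ((2 : ℝ) • A + (2 * L) • (1 : Matrix (Fin n) (Fin n) ℝ)
    + Matrix.vecMulVec (ones n) (y + β • ((U * Uᵀ).mulVec (ones n) - ones n))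
    + Matrix.vecMulVec (y + β • ((U * Uᵀ).mulVec (ones n) - ones n)) (ones n)) * U

lemma pos_part_sq_ge (u g α : ℝ) (hu : 0 ≤ u) :
    u ^ 2 - 2 * α * (g * u) ≤ (max (u - α * g) 0) ^ 2 := by
  rcases le_or_gt 0 (u - α * g) with h | h
  · rw [max_eq_left h]; nlinarith [sq_nonneg (α * g)]
  · rw [max_eq_right h.le]
    have : u - 2 * (α * g) ≤ 0 := by nlinarith
    nlinarith [mul_nonneg hu (neg_nonneg.mpr this)]

/-- If `U ≥ 0` entrywise with `‖U‖_F² = K`, `α > 0` and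
`⟨g(U), U⟩ < 0` (trace inner product), then `‖(U − α g(U))₊‖_F² > K`. -/
theorem positive_part_norm_grows {n r K : ℕ}
    (A : Matrix (Fin n) (Fin n) ℝ) (hA : Aᵀ = A)
    (y : Fin n → ℝ) (L β : ℝ)
    (U : Matrix (Fin n) (Fin r) ℝ)
    (hUnn : ∀ i j, 0 ≤ U i j)
    (hUF : (∑ i, ∑ j, (U i j) ^ 2) = (K : ℝ))
    (α : ℝ) (hα : 0 < α)
    (hg : (∑ i, ∑ j, gradLag A y L β U i j * U i j) < 0) :
    (K : ℝ) < ∑ i, ∑ j, (max ((U - α • gradLag A y L β U) i j) 0) ^ 2 := by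
  set g := gradLag A y L β U with hgdef
  have key : ∑ i, ∑ j, ((U i j) ^ 2 - 2 * α * (g i j * U i j))
      ≤ ∑ i, ∑ j, (max ((U - α • g) i j) 0) ^ 2 := by
    apply Finset.sum_le_sum
    intro i _
    apply Finset.sum_le_sum
    intro j _
    have := pos_part_sq_ge (U i j) (g i j) α (hUnn i j)
    simpa [Matrix.sub_apply, Matrix.smul_apply, smul_eq_mul] using this
  have hsum : ∑ i, ∑ j, ((U i j) ^ 2 - 2 * α * (g i j * U i j))
      = (K : ℝ) - 2 * α * ∑ i, ∑ j, g i j * U i j := by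
    simp only [Finset.sum_sub_distrib, ← Finset.mul_sum, hUF]
  rw [hsum] at key
  nlinarith
end

section
/- Let U ∈ Ω, α > 0, and suppose ⟨g(U), U⟩ < 0. Set W := U − α g(U) and let P_C(W) denote the (unique) nearest point to W in the closed convex set C. Then P_C(W) ∈ Ω, and P_C(W) is the unique minimizer of ‖U' − W‖_F over U' ∈ Ω; that is, the projection of W onto Ω coincides with the projection of W onto C. -/
/-!
Identify `n × r` matrices with `EuclideanSpace ℝ (Fin n × Fin r)`, where `frob` is the norm and
`C` is the nonnegative orthant truncated by the ball of radius `√K = ‖U‖`. The nearest point `V` of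
`C` to `W` satisfies the variational inequality `⟪W - V, M - V⟫ ≤ 0` for all `M ∈ C`, which forces
every other point of `C` at the same distance from `W` to equal `V`. Moreover
`⟪W, U⟫ = ‖U‖² - α ⟪g(U), U⟫ > ‖U‖²`, so `V` cannot lie strictly inside the ball: otherwise
`V + tU ∈ C` for small `t > 0` and the variational inequality would give
`⟪W, U⟫ ≤ ⟪V, U⟫ ≤ ‖V‖ ‖U‖ < ‖U‖²`. Hence `V ∈ Ω`, and `Ω ⊆ C` gives the rest.
-/

open Matrix Finset

open scoped RealInnerProductSpace

section NearestPoint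

variable {E : Type*} [NormedAddCommGroup E] [InnerProductSpace ℝ E] {S : Set E} {u v : E}

theorem real_inner_sub_sub_nonpos_of_isMinOn (hS : Convex ℝ S) (hv : v ∈ S)
    (hmin : IsMinOn (‖· - u‖) S v) {w : E} (hw : w ∈ S) : ⟪u - v, w - v⟫ ≤ 0 := by
  have : Nonempty S := ⟨⟨v, hv⟩⟩
  refine (norm_eq_iInf_iff_real_inner_le_zero hS hv).1 (le_antisymm ?_ ?_) w hw
  · exact le_ciInf fun w => by simpa only [norm_sub_rev u] using isMinOn_iff.1 hmin w w.2
  · exact ciInf_le ⟨0, by rintro _ ⟨w, rfl⟩; positivity⟩ (⟨v, hv⟩ : S)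

theorem eq_of_isMinOn_of_norm_sub_eq (hS : Convex ℝ S) (hv : v ∈ S)
    (hmin : IsMinOn (‖· - u‖) S v) {w : E} (hw : w ∈ S) (h : ‖w - u‖ = ‖v - u‖) :
    w = v := by
  have hinner := real_inner_sub_sub_nonpos_of_isMinOn hS hv hmin hw
  have hexpand : ‖w - u‖ ^ 2 = ‖v - u‖ ^ 2 + 2 * ⟪v - u, w - v⟫ + ‖w - v‖ ^ 2 := by
    rw [show w - u = (v - u) + (w - v) by abel, norm_add_sq_real]
  have hvu : ⟪v - u, w - v⟫ = -⟪u - v, w - v⟫ := by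
    rw [← inner_neg_left, neg_sub]
  have hsq : ‖w - v‖ ^ 2 ≤ 0 := by rw [h, hvu] at hexpand; linarith
  exact sub_eq_zero.1 <| norm_eq_zero.1 <| pow_eq_zero_iff two_ne_zero |>.1 <|
    le_antisymm hsq (sq_nonneg _)

theorem norm_eq_of_isMinOn_cone_inter_closedBall (P : ConvexCone ℝ E) {x : E} (hx : x ∈ P)
    (hux : ‖x‖ ^ 2 < ⟪u, x⟫) (hv : v ∈ (P : Set E) ∩ Metric.closedBall 0 ‖x‖)
    (hmin : IsMinOn (‖· - u‖) ((P : Set E) ∩ Metric.closedBall 0 ‖x‖) v) : ‖v‖ = ‖x‖ := by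
  have hvx : ‖v‖ ≤ ‖x‖ := mem_closedBall_zero_iff.1 hv.2
  refine le_antisymm hvx (not_lt.1 fun hlt => ?_)
  have hxpos : 0 < ‖x‖ := (norm_nonneg v).trans_lt hlt
  set t := (‖x‖ - ‖v‖) / ‖x‖ with ht
  have htpos : 0 < t := div_pos (sub_pos.2 hlt) hxpos
  have hstep : v + t • x ∈ (P : Set E) ∩ Metric.closedBall 0 ‖x‖ := by
    refine ⟨P.add_mem hv.1 (P.smul_mem htpos hx), mem_closedBall_zero_iff.2 ?_⟩
    calc ‖v + t • x‖ ≤ ‖v‖ + t * ‖x‖ := by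
          simpa [norm_smul, htpos.le, abs_of_pos htpos] using norm_add_le v (t • x)
      _ = ‖x‖ := by rw [ht, div_mul_cancel₀ _ hxpos.ne']; ring
  have hinner := real_inner_sub_sub_nonpos_of_isMinOn (P.convex.inter (convex_closedBall 0 _))
    hv hmin hstep
  rw [add_sub_cancel_left, real_inner_smul_right, inner_sub_left] at hinner
  have hcs : ⟪v, x⟫ ≤ ‖v‖ * ‖x‖ := real_inner_le_norm v x
  nlinarith [mul_lt_mul_of_pos_right hlt hxpos]

end NearestPoint

def EuclideanSpace.nonnegOrthant (ι : Type*) [Fintype ι] : ConvexCone ℝ (EuclideanSpace ℝ ι) where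
  carrier := {x | ∀ i, 0 ≤ x i}
  smul_mem' _ hc _ hx i := mul_nonneg hc.le (hx i)
  add_mem' _ hx _ hy i := add_nonneg (hx i) (hy i)

noncomputable def Matrix.toEuclideanSpace {m n : Type*} [Fintype m] [Fintype n] :
    Matrix m n ℝ ≃ₗ[ℝ] EuclideanSpace ℝ (m × n) :=
  (LinearEquiv.curry ℝ ℝ m n).symm.trans (WithLp.linearEquiv 2 ℝ (m × n → ℝ)).symm

section Transport

variable {m n : Type*} [Fintype m] [Fintype n]

@[simp]
theorem Matrix.toEuclideanSpace_apply (M : Matrix m n ℝ) (p : m × n) :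
    M.toEuclideanSpace p = M p.1 p.2 := rfl

theorem Matrix.toEuclideanSpace_mem_nonnegOrthant_iff {M : Matrix m n ℝ} :
    M.toEuclideanSpace ∈ EuclideanSpace.nonnegOrthant (m × n) ↔ ∀ i j, 0 ≤ M i j :=
  Prod.forall

theorem Matrix.inner_toEuclideanSpace (X Y : Matrix m n ℝ) :
    ⟪X.toEuclideanSpace, Y.toEuclideanSpace⟫ = ∑ i, ∑ j, X i j * Y i j := by
  simp [PiLp.inner_apply, Fintype.sum_prod_type, mul_comm]

end Transport

section Frobenius

variable {n r : ℕ}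

theorem frob_eq_norm_toEuclideanSpace (M : Matrix (Fin n) (Fin r) ℝ) :
    frob M = ‖M.toEuclideanSpace‖ := by
  simp [frob, EuclideanSpace.norm_eq, Fintype.sum_prod_type]

theorem frob_sub_eq_norm_sub_toEuclideanSpace (M N : Matrix (Fin n) (Fin r) ℝ) :
    frob (M - N) = ‖M.toEuclideanSpace - N.toEuclideanSpace‖ := by
  rw [frob_eq_norm_toEuclideanSpace, map_sub]

theorem toEuclideanSpace_mem_nonnegOrthant_inter_closedBall_iff {M : Matrix (Fin n) (Fin r) ℝ}
    {R : ℝ} : M.toEuclideanSpace ∈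
      ↑(EuclideanSpace.nonnegOrthant (Fin n × Fin r)) ∩ Metric.closedBall 0 R ↔
      (∀ i j, 0 ≤ M i j) ∧ frob M ≤ R := by
  rw [frob_eq_norm_toEuclideanSpace, ← mem_closedBall_zero_iff]
  exact and_congr_left' Matrix.toEuclideanSpace_mem_nonnegOrthant_iff

end Frobenius

theorem projection_sphere_eq_projection_ball_general {n r K : ℕ}
    (A : Matrix (Fin n) (Fin n) ℝ)
    (y : Fin n → ℝ) (L β : ℝ)
    (U : Matrix (Fin n) (Fin r) ℝ)
    (hUnn : ∀ i j, 0 ≤ U i j)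
    (hUF : frob U ^ 2 = (K : ℝ))
    (α : ℝ) (hα : 0 < α)
    (hg : (∑ i, ∑ j, gradLag A y L β U i j * U i j) < 0)
    (W : Matrix (Fin n) (Fin r) ℝ)
    (hW : W = U - α • gradLag A y L β U)
    (V : Matrix (Fin n) (Fin r) ℝ)
    (hVC : (∀ i j, 0 ≤ V i j) ∧ frob V ≤ Real.sqrt K)
    (hVproj : ∀ M : Matrix (Fin n) (Fin r) ℝ,
      (∀ i j, 0 ≤ M i j) → frob M ≤ Real.sqrt K → frob (V - W) ≤ frob (M - W)) :
    (frob V ^ 2 = (K : ℝ) ∧ ∀ i j, 0 ≤ V i j) ∧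
    (∀ U' : Matrix (Fin n) (Fin r) ℝ, frob U' ^ 2 = (K : ℝ) → (∀ i j, 0 ≤ U' i j) →
      frob (V - W) ≤ frob (U' - W)) ∧
    (∀ U' : Matrix (Fin n) (Fin r) ℝ, frob U' ^ 2 = (K : ℝ) → (∀ i j, 0 ≤ U' i j) →
      frob (U' - W) = frob (V - W) → U' = V) := by
  set e := (Matrix.toEuclideanSpace : Matrix (Fin n) (Fin r) ℝ ≃ₗ[ℝ] _)
  have hsqrtK : Real.sqrt K = ‖e U‖ := by
    rw [← hUF, frob_eq_norm_toEuclideanSpace, Real.sqrt_sq (norm_nonneg _)]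
  set S : Set (EuclideanSpace ℝ (Fin n × Fin r)) :=
    ↑(EuclideanSpace.nonnegOrthant (Fin n × Fin r)) ∩ Metric.closedBall 0 ‖e U‖
  have hmemS (M : Matrix (Fin n) (Fin r) ℝ) :
      e M ∈ S ↔ (∀ i j, 0 ≤ M i j) ∧ frob M ≤ Real.sqrt K := by
    rw [hsqrtK]; exact toEuclideanSpace_mem_nonnegOrthant_inter_closedBall_iff
  have hS : Convex ℝ S := (ConvexCone.convex _).inter (convex_closedBall 0 _)
  have hV : e V ∈ S := (hmemS V).2 hVC
  have hmin : IsMinOn (‖· - e W‖) S (e V) := isMinOn_iff.2 fun w hw => by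
    obtain ⟨M, rfl⟩ := e.surjective w
    have hM := hVproj M ((hmemS M).1 hw).1 ((hmemS M).1 hw).2
    rwa [frob_sub_eq_norm_sub_toEuclideanSpace, frob_sub_eq_norm_sub_toEuclideanSpace] at hM
  have hWU : ‖e U‖ ^ 2 < ⟪e W, e U⟫ := by
    rw [hW, map_sub, map_smul, inner_sub_left, real_inner_smul_left, real_inner_self_eq_norm_sq,
      Matrix.inner_toEuclideanSpace]
    linarith [mul_pos hα (neg_pos.2 hg)]
  have hVnorm : ‖e V‖ = ‖e U‖ := norm_eq_of_isMinOn_cone_inter_closedBall _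
    (Matrix.toEuclideanSpace_mem_nonnegOrthant_iff.2 hUnn) hWU hV hmin
  have hsphere {M : Matrix (Fin n) (Fin r) ℝ} (hM : frob M ^ 2 = K) : frob M ≤ Real.sqrt K :=
    Real.le_sqrt_of_sq_le hM.le
  refine ⟨⟨?_, hVC.1⟩, fun U' hU'F hU'nn => hVproj U' hU'nn (hsphere hU'F),
    fun U' hU'F hU'nn hU'W => e.injective ?_⟩
  · rw [frob_eq_norm_toEuclideanSpace, hVnorm, ← frob_eq_norm_toEuclideanSpace, hUF]
  · refine eq_of_isMinOn_of_norm_sub_eq hS hV hmin ((hmemS U').2 ⟨hU'nn, hsphere hU'F⟩) ?_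
    rwa [frob_sub_eq_norm_sub_toEuclideanSpace, frob_sub_eq_norm_sub_toEuclideanSpace] at hU'W

/-- Let `Ω = {U : ‖U‖_F² = K, U ≥ 0}` and
`C = {M : M ≥ 0, ‖M‖_F ≤ √K}` its convex hull.  If `U ∈ Ω`, `α > 0`,
`⟨g(U), U⟩ < 0`, and `V` is the nearest point of `C` to `W = U − α g(U)`, then
`V ∈ Ω` and `V` is the unique minimizer of `‖U' − W‖_F` over `U' ∈ Ω`: the projection
onto `Ω` coincides with the projection onto `C`. -/
theorem projection_sphere_eq_projection_ball {n r K : ℕ}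
    (A : Matrix (Fin n) (Fin n) ℝ) (hA : Aᵀ = A)
    (y : Fin n → ℝ) (L β : ℝ)
    (U : Matrix (Fin n) (Fin r) ℝ)
    (hUnn : ∀ i j, 0 ≤ U i j)
    (hUF : frob U ^ 2 = (K : ℝ))
    (α : ℝ) (hα : 0 < α)
    (hg : (∑ i, ∑ j, gradLag A y L β U i j * U i j) < 0)
    (W : Matrix (Fin n) (Fin r) ℝ)
    (hW : W = U - α • gradLag A y L β U)
    (V : Matrix (Fin n) (Fin r) ℝ)
    (hVC : (∀ i j, 0 ≤ V i j) ∧ frob V ≤ Real.sqrt K)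
    (hVproj : ∀ M : Matrix (Fin n) (Fin r) ℝ,
      (∀ i j, 0 ≤ M i j) → frob M ≤ Real.sqrt K → frob (V - W) ≤ frob (M - W)) :
    (frob V ^ 2 = (K : ℝ) ∧ ∀ i j, 0 ≤ V i j) ∧
    (∀ U' : Matrix (Fin n) (Fin r) ℝ, frob U' ^ 2 = (K : ℝ) → (∀ i j, 0 ≤ U' i j) →
      frob (V - W) ≤ frob (U' - W)) ∧
    (∀ U' : Matrix (Fin n) (Fin r) ℝ, frob U' ^ 2 = (K : ℝ) → (∀ i j, 0 ≤ U' i j) →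
      frob (U' - W) = frob (V - W) → U' = V) :=
  projection_sphere_eq_projection_ball_general A y L β U hUnn hUF α hα hg W hW V hVC hVproj
end

section
/- Let U*_1 ∈ ℝ^{n×K} be the matrix whose k-th column is (1/√n_k)1_{G_k}. Let Δ ∈ ℝ^{n×K} be any matrix whose k-th column is supported on G_k (i.e., its entries vanish outside G_k) for every k. Then ‖Δ (U*_1)ᵀ 1_n + U*_1 Δᵀ 1_n‖² ≥ (min_{k∈[K]} n_k) · ‖Δ‖_F², where the norm on the left is the Euclidean norm on ℝ^n. -/
open Matrix Finset

/-- Indicator vector of a finset. -/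
noncomputable def indVec {n : ℕ} (S : Finset (Fin n)) : Fin n → ℝ :=
  fun i => if i ∈ S then 1 else 0

/-! On a block `G_k` the vector `v = Δ U*ᵀ 1 + U* Δᵀ 1` has entries `√n_k Δ_ik + s_k / √n_k`,
where `s_k` is the sum of the `k`-th column of `Δ`. Expanding the square, the block contributes
`n_k ‖Δ_{·k}‖² + 3 s_k²` to `‖v‖²`, which is at least `(min_k n_k) ‖Δ_{·k}‖²`. -/

lemma sum_eq_sum_sum_of_existsUnique_mem {ι κ M : Type*} [Fintype ι] [Fintype κ]
    [AddCommMonoid M] {G : κ → Finset ι} (hG : ∀ i, ∃! k, i ∈ G k) (f : ι → M) :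
    ∑ i, f i = ∑ k, ∑ i ∈ G k, f i := by
  classical
  have hind : ∀ k, ∑ i ∈ G k, f i = ∑ i, if i ∈ G k then f i else 0 := fun k => by
    rw [sum_ite_mem, univ_inter]
  simp_rw [hind]
  rw [sum_comm]
  refine sum_congr rfl fun i _ => ?_
  obtain ⟨k, hk, hunique⟩ := hG i
  rw [sum_eq_single k (fun k' _ hk' => if_neg fun h => hk' (hunique k' h)) (by simp), if_pos hk]

lemma sum_sq_sqrt_card_mul_add_inv_sqrt_card_mul_sum {ι : Type*} (S : Finset ι) (x : ι → ℝ) :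
    ∑ i ∈ S, (√(#S : ℝ) * x i + (√(#S : ℝ))⁻¹ * ∑ j ∈ S, x j) ^ 2 =
      #S * ∑ i ∈ S, x i ^ 2 + 3 * (∑ j ∈ S, x j) ^ 2 := by
  rcases S.eq_empty_or_nonempty with rfl | hS
  · simp
  have hcard : (0 : ℝ) < #S := by exact_mod_cast hS.card_pos
  set t := ∑ j ∈ S, x j
  have hexpand : ∀ i ∈ S, (√(#S : ℝ) * x i + (√(#S : ℝ))⁻¹ * t) ^ 2 =
      #S * x i ^ 2 + 2 * t * x i + t ^ 2 / #S := by
    intro i _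
    field_simp
    rw [Real.sq_sqrt hcard.le]
    ring
  rw [sum_congr rfl hexpand, sum_add_distrib, sum_add_distrib, ← mul_sum, ← mul_sum, sum_const,
    nsmul_eq_mul]
  field_simp
  ring

lemma mul_transpose_mulVec_ones_apply {n : ℕ} {κ : Type*} [Fintype κ]
    (A B : Matrix (Fin n) κ ℝ) (i : Fin n) :
    ((A * Bᵀ) *ᵥ ones n) i = ∑ k, A i k * ∑ j, B j k := by
  rw [← mulVec_mulVec]
  simp [mulVec, dotProduct, ones]

lemma sum_inv_sqrt_card_mul_indVec {n : ℕ} (S : Finset (Fin n)) :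
    ∑ j, (√(#S : ℝ))⁻¹ * indVec S j = √(#S : ℝ) := by
  simp [indVec, ← div_eq_mul_inv, Real.div_sqrt]

lemma mulVec_ones_add_apply_of_mem {n K : ℕ} {G : Fin K → Finset (Fin n)}
    {Ustar Δ : Matrix (Fin n) (Fin K) ℝ} (hpart : ∀ i, ∃! k, i ∈ G k)
    (hUstar : ∀ i k, Ustar i k = (√(#(G k) : ℝ))⁻¹ * indVec (G k) i)
    (hΔ : ∀ k i, i ∉ G k → Δ i k = 0) {i : Fin n} {k : Fin K} (hi : i ∈ G k) :
    ((Δ * Ustarᵀ) *ᵥ ones n + (Ustar * Δᵀ) *ᵥ ones n) i =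
      √(#(G k) : ℝ) * Δ i k + (√(#(G k) : ℝ))⁻¹ * ∑ j ∈ G k, Δ j k := by
  have hout : ∀ k' ≠ k, i ∉ G k' := fun k' hk' h => hk' ((hpart i).unique h hi)
  have hcol : ∀ k', ∑ j, Δ j k' = ∑ j ∈ G k', Δ j k' := fun k' =>
    (sum_subset (subset_univ _) fun j _ hj => hΔ k' j hj).symm
  simp only [Pi.add_apply, mul_transpose_mulVec_ones_apply, hUstar, sum_inv_sqrt_card_mul_indVec,
    hcol]
  rw [sum_eq_single k (fun k' _ hk' => by rw [hΔ k' i (hout k' hk'), zero_mul]) (by simp),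
    sum_eq_single k (fun k' _ hk' => by simp [indVec, hout k' hk']) (by simp)]
  simp [indVec, hi, mul_comm]

theorem block_diagonal_coercivity_general {n K : ℕ} (hK : 0 < K)
    (G : Fin K → Finset (Fin n))
    (hpart : ∀ i : Fin n, ∃! k : Fin K, i ∈ G k)
    (Ustar : Matrix (Fin n) (Fin K) ℝ)
    (hUstar : ∀ i k, Ustar i k = (Real.sqrt ((G k).card : ℝ))⁻¹ * indVec (G k) i)
    (Δ : Matrix (Fin n) (Fin K) ℝ)
    (hΔ : ∀ k : Fin K, ∀ i : Fin n, Δ i k ≠ 0 → i ∈ G k) :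
    (Finset.univ.inf' ⟨⟨0, hK⟩, Finset.mem_univ _⟩ fun k => ((G k).card : ℝ)) *
        (∑ i, ∑ k, (Δ i k) ^ 2) ≤
      ∑ i, (((Δ * Ustarᵀ).mulVec (ones n) + (Ustar * Δᵀ).mulVec (ones n)) i) ^ 2 := by
  have hΔ' : ∀ k i, i ∉ G k → Δ i k = 0 := fun k i hi => not_imp_comm.1 (hΔ k i) hi
  rw [sum_comm, mul_sum, sum_eq_sum_sum_of_existsUnique_mem hpart]
  refine sum_le_sum fun k _ => ?_
  have hcol : ∑ i, Δ i k ^ 2 = ∑ i ∈ G k, Δ i k ^ 2 :=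
    (sum_subset (subset_univ (G k)) fun i _ hi => by simp [hΔ' k i hi]).symm
  have hblock : ∑ i ∈ G k, ((Δ * Ustarᵀ) *ᵥ ones n + (Ustar * Δᵀ) *ᵥ ones n) i ^ 2 =
      #(G k) * ∑ i ∈ G k, Δ i k ^ 2 + 3 * (∑ j ∈ G k, Δ j k) ^ 2 := by
    rw [sum_congr rfl fun i hi => by rw [mulVec_ones_add_apply_of_mem hpart hUstar hΔ' hi],
      sum_sq_sqrt_card_mul_add_inv_sqrt_card_mul_sum]
  rw [hcol, hblock]
  calc _ ≤ (#(G k) : ℝ) * ∑ i ∈ G k, Δ i k ^ 2 := by gcongr; exact inf'_le _ (mem_univ k)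
    _ ≤ _ := le_add_of_nonneg_right (by positivity)

/-- Let `U*₁ ∈ ℝ^{n×K}` have `k`-th column `(1/√n_k) 1_{G_k}`, and let
`Δ ∈ ℝ^{n×K}` have its `k`-th column supported on `G_k`.  Then
`‖Δ(U*₁)ᵀ1 + U*₁Δᵀ1‖² ≥ (min_k n_k) ‖Δ‖_F²`. -/
theorem block_diagonal_coercivity {n K : ℕ} (hK : 0 < K)
    (G : Fin K → Finset (Fin n))
    (hpart : ∀ i : Fin n, ∃! k : Fin K, i ∈ G k)
    (hne : ∀ k, (G k).Nonempty)
    (Ustar : Matrix (Fin n) (Fin K) ℝ)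
    (hUstar : ∀ i k, Ustar i k = (Real.sqrt ((G k).card : ℝ))⁻¹ * indVec (G k) i)
    (Δ : Matrix (Fin n) (Fin K) ℝ)
    (hΔ : ∀ k : Fin K, ∀ i : Fin n, Δ i k ≠ 0 → i ∈ G k) :
    (Finset.univ.inf' ⟨⟨0, hK⟩, Finset.mem_univ _⟩ fun k => ((G k).card : ℝ)) *
        (∑ i, ∑ k, (Δ i k) ^ 2) ≤
      ∑ i, (((Δ * Ustarᵀ).mulVec (ones n) + (Ustar * Δᵀ).mulVec (ones n)) i) ^ 2 :=
  block_diagonal_coercivity_general hK G hpart Ustar hUstar Δ hΔ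
end
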